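/- arXiv:2110.01180 — 2 statements merged into one kernel-verified Lean document; each statement's English description precedes it below -/
import Mathlib

section
/- Let E be a row-finite directed graph, S a hereditary subset of E^0, and v ∈ ⟨S⟩, where ⟨S⟩ is the hereditary saturated closure of S. Then there exists l ∈ ℕ such that every path p with s(p) = v of length greater than l satisfies r(p) ∈ S. -/
structure DirGraph where
  V : Type
  E : Type
  src : E → V
  rng : E → V

namespace DirGraph

def RowFinite (G : DirGraph) : Prop := ∀ v : G.V, {e : G.E | G.src e = v}.Finite

def Hereditary (G : DirGraph) (H : Set G.V) : Prop :=
  ∀ e : G.E, G.src e ∈ H → G.rng e ∈ H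

def Regular (G : DirGraph) (v : G.V) : Prop := ∃ e : G.E, G.src e = v

def IsSink (G : DirGraph) (v : G.V) : Prop := ¬ G.Regular v

def Saturated (G : DirGraph) (H : Set G.V) : Prop :=
  ∀ v : G.V, G.Regular v → (∀ e : G.E, G.src e = v → G.rng e ∈ H) → v ∈ H

/-- The iterative construction `S_i` of the hereditary saturated closure. -/
def satIter (G : DirGraph) (S : Set G.V) : ℕ → Set G.V
  | 0 => S
  | n + 1 => satIter G S n ∪
      {v : G.V | G.Regular v ∧ ∀ e : G.E, G.src e = v → G.rng e ∈ satIter G S n}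

/-- The hereditary and saturated closure `⟨S⟩ = ⋃ i S_i`. -/
def hsClosure (G : DirGraph) (S : Set G.V) : Set G.V := ⋃ n : ℕ, G.satIter S n

def IsPathChain (G : DirGraph) (p : List G.E) : Prop :=
  p.Chain' fun e f => G.rng e = G.src f

/-- A path from `u` to `w`; the empty path is allowed (then `u = w`). -/
structure GPath (G : DirGraph) (u w : G.V) where
  edges : List G.E
  chain : G.IsPathChain edges
  src_eq : ∀ h : edges ≠ [], G.src (edges.head h) = u
  rng_eq : ∀ h : edges ≠ [], G.rng (edges.getLast h) = w
  nil_eq : edges = [] → u = w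

/-- A cycle: a nonempty closed simple path. -/
def IsCycle (G : DirGraph) (p : List G.E) : Prop :=
  ∃ h : p ≠ [], G.IsPathChain p ∧ G.rng (p.getLast h) = G.src (p.head h) ∧
    (p.map G.src).Nodup

/-- The cycle `p` has no exit: every edge emitted from a vertex of `p` is on `p`. -/
def CycleHasNoExit (G : DirGraph) (p : List G.E) : Prop :=
  ∀ e ∈ p, ∀ f : G.E, G.src f = G.src e → f ∈ p

def NoExitCycle (G : DirGraph) (p : List G.E) : Prop := G.IsCycle p ∧ G.CycleHasNoExit p

def OnNoExitCycle (G : DirGraph) (v : G.V) : Prop :=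
  ∃ p : List G.E, G.NoExitCycle p ∧ v ∈ p.map G.src

/-- The quotient graph `E/H`: vertices `E⁰ \ H`, edges `{e | r(e) ∉ H}`. -/
def quotGraph (G : DirGraph) (H : Set G.V) (hH : G.Hereditary H) : DirGraph where
  V := {v : G.V // v ∉ H}
  E := {e : G.E // G.rng e ∉ H}
  src e := ⟨G.src e.1, fun h => e.2 (hH e.1 h)⟩
  rng e := ⟨G.rng e.1, e.2⟩

end DirGraph

/-! Each edge leaving a vertex of `S_n` lands in `S_(n-1)`, and `S = S_0` is hereditary, so the level
drops by at most one per edge of a path; after more than `n` edges from a vertex of `S_n` the path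
ends in `S`. -/

namespace DirGraph

variable {G : DirGraph} {S : Set G.V}

theorem satIter_mono : Monotone (G.satIter S) :=
  monotone_nat_of_le_succ fun _ => Set.subset_union_left

/-- At `n = 0` the truncated `n - 1` is `0` again: this case is heredity of `S`. -/
theorem Hereditary.rng_mem_satIter_pred (hS : G.Hereditary S) {e : G.E} :
    ∀ {n : ℕ}, G.src e ∈ G.satIter S n → G.rng e ∈ G.satIter S (n - 1)
  | 0, h => hS e h
  | n + 1, .inl h => satIter_mono (Nat.sub_le_sub_right n.le_succ 1) (hS.rng_mem_satIter_pred h)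
  | _ + 1, .inr ⟨_, hall⟩ => hall e rfl

theorem Hereditary.rng_getLast_mem_satIter (hS : G.Hereditary S) :
    ∀ {p : List G.E}, G.IsPathChain p → ∀ (hne : p ≠ []) {n : ℕ},
      G.src (p.head hne) ∈ G.satIter S n → G.rng (p.getLast hne) ∈ G.satIter S (n - p.length)
  | [e], _, _, _, h => hS.rng_mem_satIter_pred h
  | e :: f :: rest, hp, _, n, h => by
    obtain ⟨hef, hrest⟩ := List.isChain_cons_cons.mp hp
    have hf : G.src f ∈ G.satIter S (n - 1) := hef ▸ hS.rng_mem_satIter_pred h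
    have hlast := hS.rng_getLast_mem_satIter hrest (List.cons_ne_nil f rest) hf
    simpa [Nat.sub_sub, Nat.add_comm] using hlast

theorem Hereditary.mem_satIter_of_gPath (hS : G.Hereditary S) {v w : G.V} (p : G.GPath v w)
    {n : ℕ} (hv : v ∈ G.satIter S n) : w ∈ G.satIter S (n - p.edges.length) := by
  by_cases hne : p.edges = []
  · simpa [hne, ← p.nil_eq hne] using hv
  · have hlast := hS.rng_getLast_mem_satIter p.chain hne (p.src_eq hne ▸ hv)
    rwa [p.rng_eq hne] at hlast

end DirGraph

theorem stmt1_general (G : DirGraph) (S : Set G.V) (hS : G.Hereditary S)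
    (v : G.V) (hv : v ∈ G.hsClosure S) :
    ∃ l : ℕ, ∀ (w : G.V) (p : G.GPath v w), l < p.edges.length → w ∈ S := by
  obtain ⟨n, hn⟩ := Set.mem_iUnion.mp hv
  refine ⟨n, fun w p hlen => ?_⟩
  have hw := hS.mem_satIter_of_gPath p hn
  rwa [Nat.sub_eq_zero_of_le hlen.le] at hw

theorem stmt1 (G : DirGraph) (hrf : G.RowFinite) (S : Set G.V) (hS : G.Hereditary S)
    (v : G.V) (hv : v ∈ G.hsClosure S) :
    ∃ l : ℕ, ∀ (w : G.V) (p : G.GPath v w), l < p.edges.length → w ∈ S :=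
  stmt1_general G S hS v hv
end

section
/- Let E be a row-finite directed graph and H ⊆ K hereditary and saturated subsets of E^0. Define K/H to be the graph with vertices K \ H and edges {e ∈ E^1 : s(e) ∈ K, r(e) ∉ H}. Then the map K ↦ K/H is a one-to-one correspondence between hereditary saturated subsets of E containing H and hereditary saturated subsets of the quotient graph E/H, and moreover (E/H)/(K/H) = E/K. -/
/-- An isomorphism of directed graphs. -/
structure GraphIso (G₁ G₂ : DirGraph) where
  vEquiv : G₁.V ≃ G₂.V
  eEquiv : G₁.E ≃ G₂.E
  src_comm : ∀ e : G₁.E, G₂.src (eEquiv e) = vEquiv (G₁.src e)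
  rng_comm : ∀ e : G₁.E, G₂.rng (eEquiv e) = vEquiv (G₁.rng e)

/-!
A vertex of `E/H` is a vertex of `E` outside `H`, so a set `K ⊇ H` is determined by `K \ H`, and
conversely a set `L` of vertices of `E/H` comes from `H ∪ L`. The edges of `E/H` leaving `v` are
the edges of `E` leaving `v` that do not land in `H`; since `H` is saturated, a regular vertex
outside `H` still emits such an edge, which is what lets saturation pass between `E` and `E/H`.
-/

namespace DirGraph

variable {G : DirGraph} {H K K' : Set G.V} (hH : G.Hereditary H)

theorem hereditary_quotGraph (hK : G.Hereditary K) :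
    (G.quotGraph H hH).Hereditary {v | v.1 ∈ K} :=
  fun e he => hK e.1 he

theorem saturated_quotGraph (hHK : H ⊆ K) (hK : G.Saturated K) :
    (G.quotGraph H hH).Saturated {v | v.1 ∈ K} := by
  rintro v ⟨e, he⟩ hall
  refine hK v.1 ⟨e.1, congrArg Subtype.val he⟩ fun f hf => ?_
  by_cases hfH : G.rng f ∈ H
  · exact hHK hfH
  · exact hall ⟨f, hfH⟩ (Subtype.ext hf)

theorem eq_of_quotGraph_eq (hHK : H ⊆ K) (hHK' : H ⊆ K')
    (heq : {v : (G.quotGraph H hH).V | v.1 ∈ K} = {v | v.1 ∈ K'}) : K = K' := by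
  ext v
  by_cases hv : v ∈ H
  · exact iff_of_true (hHK hv) (hHK' hv)
  · exact Set.ext_iff.mp heq ⟨v, hv⟩

theorem regular_quotGraph (hHs : G.Saturated H) {v : G.V} (hreg : G.Regular v) (hv : v ∉ H) :
    (G.quotGraph H hH).Regular ⟨v, hv⟩ := by
  by_contra hnot
  refine hv (hHs v hreg fun e he => ?_)
  by_contra heH
  exact hnot ⟨⟨e, heH⟩, Subtype.ext he⟩

/-- The set `H ∪ L` of vertices of `E`. -/
def liftQuotSet (L : Set (G.quotGraph H hH).V) : Set G.V :=
  {v | ∀ hv : v ∉ H, (⟨v, hv⟩ : (G.quotGraph H hH).V) ∈ L}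

variable {hH} {L : Set (G.quotGraph H hH).V}

theorem subset_liftQuotSet : H ⊆ liftQuotSet hH L :=
  fun _ hv hv' => absurd hv hv'

theorem hereditary_liftQuotSet (hL : (G.quotGraph H hH).Hereditary L) :
    G.Hereditary (liftQuotSet hH L) := by
  intro e hsrc hrng
  have hsrcH : G.src e ∉ H := fun h => hrng (hH e h)
  exact hL ⟨e, hrng⟩ (hsrc hsrcH)

theorem saturated_liftQuotSet (hHs : G.Saturated H) (hL : (G.quotGraph H hH).Saturated L) :
    G.Saturated (liftQuotSet hH L) := by
  intro v hreg hall hv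
  exact hL ⟨v, hv⟩ (regular_quotGraph hH hHs hreg hv) fun f hf =>
    hall f.1 (congrArg Subtype.val hf) f.2

theorem quotGraph_liftQuotSet : {v : (G.quotGraph H hH).V | v.1 ∈ liftQuotSet hH L} = L :=
  Set.ext fun v => ⟨fun h => h v.2, fun h _ => h⟩

def quotGraphQuotGraphIso (hK : G.Hereditary K) (hHK : H ⊆ K) :
    GraphIso ((G.quotGraph H hH).quotGraph {v | v.1 ∈ K} (fun e h => hK e.1 h))
      (G.quotGraph K hK) where
  vEquiv :=
    { toFun := fun v => ⟨v.1.1, v.2⟩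
      invFun := fun v => ⟨⟨v.1, fun h => v.2 (hHK h)⟩, v.2⟩
      left_inv := fun _ => rfl
      right_inv := fun _ => rfl }
  eEquiv :=
    { toFun := fun e => ⟨e.1.1, e.2⟩
      invFun := fun e => ⟨⟨e.1, fun h => e.2 (hHK h)⟩, e.2⟩
      left_inv := fun _ => rfl
      right_inv := fun _ => rfl }
  src_comm := fun _ => rfl
  rng_comm := fun _ => rfl

end DirGraph

theorem stmt6_general (G : DirGraph) (H : Set G.V)
    (hH : G.Hereditary H) (hHs : G.Saturated H) :
    let Q := G.quotGraph H hH
    -- the map K ↦ K/H lands in hereditary saturated subsets of E/H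
    (∀ K : Set G.V, H ⊆ K → G.Hereditary K → G.Saturated K →
       Q.Hereditary {v : Q.V | v.1 ∈ K} ∧ Q.Saturated {v : Q.V | v.1 ∈ K}) ∧
    -- injectivity
    (∀ K K' : Set G.V, H ⊆ K → G.Hereditary K → G.Saturated K →
       H ⊆ K' → G.Hereditary K' → G.Saturated K' →
       {v : Q.V | v.1 ∈ K} = {v : Q.V | v.1 ∈ K'} → K = K') ∧
    -- surjectivity
    (∀ L : Set Q.V, Q.Hereditary L → Q.Saturated L →
       ∃ K : Set G.V, H ⊆ K ∧ G.Hereditary K ∧ G.Saturated K ∧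
         {v : Q.V | v.1 ∈ K} = L) ∧
    -- (E/H)/(K/H) = E/K
    (∀ (K : Set G.V) (hK : G.Hereditary K), H ⊆ K → G.Saturated K →
       Nonempty (GraphIso
         (Q.quotGraph {v : Q.V | v.1 ∈ K} (fun e h => hK e.1 h))
         (G.quotGraph K hK))) :=
  ⟨fun _ hHK hK hKs =>
      ⟨DirGraph.hereditary_quotGraph hH hK, DirGraph.saturated_quotGraph hH hHK hKs⟩,
    fun _ _ hHK _ _ hHK' _ _ heq => DirGraph.eq_of_quotGraph_eq hH hHK hHK' heq,
    fun _ hL hLs => ⟨DirGraph.liftQuotSet hH _, DirGraph.subset_liftQuotSet,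
      DirGraph.hereditary_liftQuotSet hL, DirGraph.saturated_liftQuotSet hHs hLs,
      DirGraph.quotGraph_liftQuotSet⟩,
    fun _ hK hHK _ => ⟨DirGraph.quotGraphQuotGraphIso hK hHK⟩⟩

theorem stmt6 (G : DirGraph) (hrf : G.RowFinite) (H : Set G.V)
    (hH : G.Hereditary H) (hHs : G.Saturated H) :
    let Q := G.quotGraph H hH
    -- the map K ↦ K/H lands in hereditary saturated subsets of E/H
    (∀ K : Set G.V, H ⊆ K → G.Hereditary K → G.Saturated K →
       Q.Hereditary {v : Q.V | v.1 ∈ K} ∧ Q.Saturated {v : Q.V | v.1 ∈ K}) ∧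
    -- injectivity
    (∀ K K' : Set G.V, H ⊆ K → G.Hereditary K → G.Saturated K →
       H ⊆ K' → G.Hereditary K' → G.Saturated K' →
       {v : Q.V | v.1 ∈ K} = {v : Q.V | v.1 ∈ K'} → K = K') ∧
    -- surjectivity
    (∀ L : Set Q.V, Q.Hereditary L → Q.Saturated L →
       ∃ K : Set G.V, H ⊆ K ∧ G.Hereditary K ∧ G.Saturated K ∧
         {v : Q.V | v.1 ∈ K} = L) ∧
    -- (E/H)/(K/H) = E/K
    (∀ (K : Set G.V) (hK : G.Hereditary K), H ⊆ K → G.Saturated K →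
       Nonempty (GraphIso
         (Q.quotGraph {v : Q.V | v.1 ∈ K} (fun e h => hK e.1 h))
         (G.quotGraph K hK))) :=
  stmt6_general G H hH hHs
end
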